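/- Let E, F be elements of a unital Banach algebra such that F has g-Drazin inverse, E F^π has g-Drazin inverse, F^π E F F^d = 0 where F^π = 1 − F F^d. Then F^π E has g-Drazin inverse and (F^π E)^d = F^π E^d, provided E has g-Drazin inverse E^d and F^π E F F^d = 0. -/

import Mathlib

open Filter Topology

/-- An element of a normed ring is quasinilpotent if `‖a^n‖^(1/n) → 0`. -/
def IsQuasinilpotent {A : Type*} [NormedRing A] (a : A) : Prop :=
  Filter.Tendsto (fun n : ℕ => ‖a ^ n‖ ^ ((1 : ℝ) / n)) Filter.atTop (nhds 0)

/-- `b` is a generalized Drazin inverse of `a`. -/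
def IsGDrazinInverse {A : Type*} [NormedRing A] (a b : A) : Prop :=
  a * b = b * a ∧ b * a * b = b ∧ IsQuasinilpotent (a - a ^ 2 * b)

/-! With `p = 1 - F F^d`, the hypothesis says `p E p = p E`, so `(p E)^(k+1) = p E^(k+1)`.
Cline's formula turns a g-Drazin inverse `y` of `E p` into the g-Drazin inverse `z = p y² E`
of `p E`. To identify `z` with `p E^d`, argue as in the uniqueness proof of g-Drazin inverses:
`z (1 - E E^d) = z^(k+2) p (E - E² E^d)^(k+1)` and
`(1 - p E z) p E^d = (p E - (p E)² z)^(k+1) (E^d)^(k+2)` are dominated by powers of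
quasinilpotent elements for every `k`, hence vanish, and then `z = z E E^d = p E z p E^d = p E^d`.
-/

lemma Real.rpow_one_div_natCast_lt_iff {x t : ℝ} (hx : 0 ≤ x) (ht : 0 ≤ t) {k : ℕ} (hk : k ≠ 0) :
    x ^ ((1 : ℝ) / k) < t ↔ x < t ^ k := by
  rw [one_div, Real.rpow_inv_lt_iff_of_pos hx ht (by positivity), Real.rpow_natCast]

theorem mul_pow_succ_of_mul_mul_eq {M : Type*} [Monoid M] {p a : M} (hpa : p * a * p = p * a)
    (k : ℕ) : (p * a) ^ (k + 1) = p * a ^ (k + 1) := by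
  induction k with
  | zero => rw [zero_add, pow_one, pow_one]
  | succ k ih => rw [pow_succ', ih, ← mul_assoc, hpa, pow_succ' a (k + 1), mul_assoc]

section NormedRing

variable {A : Type*} [NormedRing A]

theorem isQuasinilpotent_iff_tendsto_pow_mul_norm_pow {u : A} :
    IsQuasinilpotent u ↔
      ∀ r : ℝ, 0 ≤ r → Tendsto (fun k : ℕ => r ^ k * ‖u ^ k‖) atTop (𝓝 0) := by
  constructor
  · intro hu r hr
    set δ : ℝ := 1 / (2 * (r + 1))
    have hδ : 0 < δ := by positivity
    have hrδ : r * δ ≤ 1 / 2 := by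
      rw [mul_one_div, div_le_div_iff₀ (by positivity) two_pos]; linarith
    refine squeeze_zero' (.of_forall fun k => by positivity) ?_
      (tendsto_pow_atTop_nhds_zero_of_lt_one (by norm_num) (by norm_num : (1 / 2 : ℝ) < 1))
    filter_upwards [hu.eventually (gt_mem_nhds hδ), eventually_ne_atTop 0] with k hk hk0
    have hu_k : ‖u ^ k‖ ≤ δ ^ k :=
      ((Real.rpow_one_div_natCast_lt_iff (norm_nonneg _) hδ.le hk0).1 hk).le
    calc r ^ k * ‖u ^ k‖ ≤ r ^ k * δ ^ k := by gcongr
      _ = (r * δ) ^ k := (mul_pow r δ k).symm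
      _ ≤ (1 / 2) ^ k := by gcongr
  · intro h
    refine tendsto_order.2 ⟨fun a ha => .of_forall fun k => ha.trans_le (by positivity),
      fun ε hε => ?_⟩
    filter_upwards [(h ε⁻¹ (by positivity)).eventually (gt_mem_nhds one_pos),
      eventually_ne_atTop 0] with k hk hk0
    rw [Real.rpow_one_div_natCast_lt_iff (norm_nonneg _) hε.le hk0]
    rwa [inv_pow, inv_mul_lt_iff₀ (by positivity), mul_one] at hk

theorem IsQuasinilpotent.tendsto_pow_mul_norm_pow {u : A} (hu : IsQuasinilpotent u) {r : ℝ}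
    (hr : 0 ≤ r) : Tendsto (fun k : ℕ => r ^ k * ‖u ^ k‖) atTop (𝓝 0) :=
  isQuasinilpotent_iff_tendsto_pow_mul_norm_pow.1 hu r hr

theorem IsQuasinilpotent.eq_zero_of_norm_le {u w : A} (hu : IsQuasinilpotent u) {C r : ℝ}
    (hr : 0 ≤ r) (h : ∀ k, ‖w‖ ≤ C * (r ^ (k + 1) * ‖u ^ (k + 1)‖)) : w = 0 := by
  have hlim := ((tendsto_add_atTop_iff_nat 1).2 (hu.tendsto_pow_mul_norm_pow hr)).const_mul C
  rw [mul_zero] at hlim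
  exact norm_le_zero_iff.1 (ge_of_tendsto' hlim h)

theorem IsQuasinilpotent.mul_comm {x y : A} (h : IsQuasinilpotent (x * y)) :
    IsQuasinilpotent (y * x) := by
  refine isQuasinilpotent_iff_tendsto_pow_mul_norm_pow.2 fun r hr => ?_
  refine (tendsto_add_atTop_iff_nat 1).1 (squeeze_zero (fun k => by positivity) (fun k => ?_)
    (by simpa using (h.tendsto_pow_mul_norm_pow hr).const_mul (r * ‖y‖ * ‖x‖)))
  have hpow : (y * x) ^ (k + 1) = y * (x * y) ^ k * x := by
    have hsemi : SemiconjBy y (x * y) (y * x) := (mul_assoc y x y).symm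
    rw [pow_succ, ← mul_assoc, ← (hsemi.pow_right k).eq]
  calc r ^ (k + 1) * ‖(y * x) ^ (k + 1)‖ ≤ r ^ (k + 1) * (‖y‖ * ‖(x * y) ^ k‖ * ‖x‖) := by
        rw [hpow]; gcongr; exact (norm_mul_le _ _).trans (by gcongr; exact norm_mul_le _ _)
    _ = r * ‖y‖ * ‖x‖ * (r ^ k * ‖(x * y) ^ k‖) := by ring

namespace IsGDrazinInverse

variable {a b : A}

theorem commute (h : IsGDrazinInverse a b) : Commute a b := h.1

theorem isIdempotentElem_mul (h : IsGDrazinInverse a b) : IsIdempotentElem (a * b) := by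
  rw [IsIdempotentElem, mul_assoc, ← mul_assoc b, h.2.1]

theorem commute_one_sub_mul (h : IsGDrazinInverse a b) : Commute a (1 - a * b) :=
  (Commute.one_right a).sub_right ((Commute.refl a).mul_right h.commute)

theorem pow_succ_mul_pow (h : IsGDrazinInverse a b) (k : ℕ) : b ^ (k + 1) * a ^ k = b := by
  rw [pow_succ', mul_assoc, ← h.commute.symm.mul_pow]
  cases k with
  | zero => rw [pow_zero, mul_one]
  | succ k =>
    have hba : IsIdempotentElem (b * a) := h.commute ▸ h.isIdempotentElem_mul
    rw [hba.pow_succ_eq, ← h.commute.eq, ← mul_assoc, h.2.1]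

theorem pow_mul_pow_succ (h : IsGDrazinInverse a b) (k : ℕ) : a ^ k * b ^ (k + 1) = b :=
  ((h.commute.pow_pow k (k + 1)).eq).trans (h.pow_succ_mul_pow k)

theorem pow_succ_mul_one_sub (h : IsGDrazinInverse a b) (k : ℕ) :
    a ^ (k + 1) * (1 - a * b) = (a - a ^ 2 * b) ^ (k + 1) := by
  rw [show a - a ^ 2 * b = a * (1 - a * b) by noncomm_ring, h.commute_one_sub_mul.mul_pow,
    h.isIdempotentElem_mul.one_sub.pow_succ_eq]

theorem one_sub_mul_pow_succ (h : IsGDrazinInverse a b) (k : ℕ) :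
    (1 - a * b) * a ^ (k + 1) = (a - a ^ 2 * b) ^ (k + 1) := by
  rw [← (h.commute_one_sub_mul.pow_left (k + 1)).eq, h.pow_succ_mul_one_sub]

theorem cline {x y d : A} (h : IsGDrazinInverse (x * y) d) :
    IsGDrazinInverse (y * x) (y * d ^ 2 * x) := by
  have hd_sq : d ^ 2 * (x * y) = d := by simpa using h.pow_succ_mul_pow 1
  have hsq_d : x * y * d ^ 2 = d := by simpa using h.pow_mul_pow_succ 1
  refine ⟨?_, ?_, ?_⟩
  · calc y * x * (y * d ^ 2 * x) = y * (x * y * d ^ 2) * x := by noncomm_ring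
      _ = y * (d ^ 2 * (x * y)) * x := by rw [hsq_d, hd_sq]
      _ = y * d ^ 2 * x * (y * x) := by noncomm_ring
  · calc y * d ^ 2 * x * (y * x) * (y * d ^ 2 * x)
          = y * (d ^ 2 * (x * y)) * (x * y * d ^ 2) * x := by noncomm_ring
      _ = y * d ^ 2 * x := by rw [hd_sq, hsq_d, sq, mul_assoc y]
  · have hleft : y * x - (y * x) ^ 2 * (y * d ^ 2 * x) = y * ((1 - x * y * d) * x) := by
      calc y * x - (y * x) ^ 2 * (y * d ^ 2 * x) = y * x - y * (x * y * (x * y * d ^ 2)) * x := by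
            noncomm_ring
        _ = y * ((1 - x * y * d) * x) := by rw [hsq_d]; noncomm_ring
    have hright : (1 - x * y * d) * x * y = x * y - (x * y) ^ 2 * d := by
      calc (1 - x * y * d) * x * y = x * y - x * y * (d * (x * y)) := by noncomm_ring
        _ = x * y - (x * y) ^ 2 * d := by rw [← h.commute]; noncomm_ring
    rw [hleft]
    exact IsQuasinilpotent.mul_comm (hright ▸ h.2.2)

theorem eq_mul_of_mul_mul_eq {p z : A} (hab : IsGDrazinInverse a b) (hpa : p * a * p = p * a)
    (hz : IsGDrazinInverse (p * a) z) : z = p * b := by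
  have hz_sq : z ^ 2 * (p * a) = z := by simpa using hz.pow_succ_mul_pow 1
  have hzp : z * p = z := by
    calc z * p = z ^ 2 * (p * a * p) := by rw [← mul_assoc, hz_sq]
      _ = z := by rw [hpa, hz_sq]
  have hz_ab : z * (1 - a * b) = 0 := by
    refine hab.2.2.eq_zero_of_norm_le (C := ‖z‖ * ‖p‖) (norm_nonneg z) fun k => ?_
    have hw : z * (1 - a * b) = z ^ (k + 2) * p * (a - a ^ 2 * b) ^ (k + 1) := by
      calc z * (1 - a * b) = z ^ (k + 2) * (p * a) ^ (k + 1) * (1 - a * b) := by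
            rw [hz.pow_succ_mul_pow (k + 1)]
        _ = z ^ (k + 2) * p * (a ^ (k + 1) * (1 - a * b)) := by
            rw [mul_pow_succ_of_mul_mul_eq hpa]; noncomm_ring
        _ = z ^ (k + 2) * p * (a - a ^ 2 * b) ^ (k + 1) := by rw [hab.pow_succ_mul_one_sub]
    rw [hw]
    calc ‖z ^ (k + 2) * p * (a - a ^ 2 * b) ^ (k + 1)‖
        ≤ ‖z‖ ^ (k + 2) * ‖p‖ * ‖(a - a ^ 2 * b) ^ (k + 1)‖ := by
          refine (norm_mul_le _ _).trans ?_
          gcongr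
          exact (norm_mul_le _ _).trans (by gcongr; exact norm_pow_le' z (by omega))
      _ = ‖z‖ * ‖p‖ * (‖z‖ ^ (k + 1) * ‖(a - a ^ 2 * b) ^ (k + 1)‖) := by ring
  have hpb : (1 - p * a * z) * (p * b) = 0 := by
    refine hz.2.2.eq_zero_of_norm_le (C := ‖b‖) (norm_nonneg b) fun k => ?_
    have hw : (1 - p * a * z) * (p * b) = (p * a - (p * a) ^ 2 * z) ^ (k + 1) * b ^ (k + 2) := by
      calc (1 - p * a * z) * (p * b) = (1 - p * a * z) * (p * a) ^ (k + 1) * b ^ (k + 2) := by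
            rw [mul_pow_succ_of_mul_mul_eq hpa, mul_assoc (1 - p * a * z),
              mul_assoc p (a ^ (k + 1)), hab.pow_mul_pow_succ (k + 1)]
        _ = (p * a - (p * a) ^ 2 * z) ^ (k + 1) * b ^ (k + 2) := by
            rw [hz.one_sub_mul_pow_succ]
    rw [hw]
    calc ‖(p * a - (p * a) ^ 2 * z) ^ (k + 1) * b ^ (k + 2)‖
        ≤ ‖(p * a - (p * a) ^ 2 * z) ^ (k + 1)‖ * ‖b‖ ^ (k + 2) :=
          (norm_mul_le _ _).trans (by gcongr; exact norm_pow_le' b (by omega))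
      _ = ‖b‖ * (‖b‖ ^ (k + 1) * ‖(p * a - (p * a) ^ 2 * z) ^ (k + 1)‖) := by ring
  rw [mul_sub, mul_one, sub_eq_zero] at hz_ab
  rw [sub_mul, one_mul, sub_eq_zero] at hpb
  calc z = z * p * (a * b) := by rw [hzp]; exact hz_ab
    _ = z * (p * a * p) * b := by rw [hpa]; noncomm_ring
    _ = p * a * z * (p * b) := by rw [hz.1]; noncomm_ring
    _ = p * b := hpb.symm

theorem mul_left_of_mul_mul_eq {p y : A} (hab : IsGDrazinInverse a b) (hpa : p * a * p = p * a)
    (hy : IsGDrazinInverse (a * p) y) : IsGDrazinInverse (p * a) (p * b) :=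
  hab.eq_mul_of_mul_mul_eq hpa hy.cline ▸ hy.cline

end IsGDrazinInverse

end NormedRing

theorem stmt11_general {A : Type*} [NormedRing A]
    (E F Fd Ed : A) (hE : IsGDrazinInverse E Ed)
    (hEFpi : ∃ y, IsGDrazinInverse (E * (1 - F * Fd)) y)
    (h : (1 - F * Fd) * E * (F * Fd) = 0) :
    IsGDrazinInverse ((1 - F * Fd) * E) ((1 - F * Fd) * Ed) := by
  obtain ⟨y, hy⟩ := hEFpi
  refine hE.mul_left_of_mul_mul_eq ?_ hy
  rw [mul_sub, mul_one, h, sub_zero]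

theorem stmt11 {A : Type*} [NormedRing A] [NormedAlgebra ℂ A] [CompleteSpace A]
    (E F Fd Ed : A) (hF : IsGDrazinInverse F Fd) (hE : IsGDrazinInverse E Ed)
    (hEFpi : ∃ y, IsGDrazinInverse (E * (1 - F * Fd)) y)
    (h : (1 - F * Fd) * E * (F * Fd) = 0) :
    IsGDrazinInverse ((1 - F * Fd) * E) ((1 - F * Fd) * Ed) :=
  stmt11_general E F Fd Ed hE hEFpi h
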